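/- Let k be a field, r ≥ 2, and let a₁, a₂ be two distinct free generators of F_r. Then for every c ∈ F_r one has ⁅⁅a₁,a₂⁆,c⁆ = 0 if and only if c lies in the derived ideal F_r². Consequently the Fitting radical Fit(F_r) = F_r² is an algebraic set in the affine space F_r¹, namely V({⁅⁅a₁,a₂⁆,x₁⁆}). -/

import Mathlib

open LieAlgebra

universe u v w

/-- A Lie ring is metabelian if it satisfies the identity `⁅⁅x₁,x₂⁆,⁅x₃,x₄⁆⁆ = 0`. -/
def IsMetabelian (L : Type v) [LieRing L] : Prop :=
  ∀ a b c d : L, ⁅⁅a, b⁆, ⁅c, d⁆⁆ = 0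

variable (k : Type u) [Field k]

namespace LieMeta

/-- The canonical projection onto the quotient by a Lie ideal, as a Lie algebra morphism. -/
def mkHom {L : Type v} [LieRing L] [LieAlgebra k L] (I : LieIdeal k L) : L →ₗ⁅k⁆ L ⧸ I :=
  { I.toSubmodule.mkQ with
    map_lie' := fun {_ _} => rfl }

variable {k}

/-- Lift of a Lie algebra morphism through a quotient by an ideal inside its kernel. -/
def qlift {L : Type v} {B : Type w} [LieRing L] [LieAlgebra k L] [LieRing B] [LieAlgebra k B]
    (I : LieIdeal k L) (f : L →ₗ⁅k⁆ B) (h : I ≤ f.ker) : (L ⧸ I) →ₗ⁅k⁆ B :=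
  { Submodule.liftQ I.toSubmodule (f : L →ₗ[k] B)
      (fun x hx => by simpa using (LieHom.mem_ker).mp (h hx)) with
    map_lie' := by
      rintro ⟨x⟩ ⟨y⟩
      exact f.map_lie x y }

@[simp]
theorem qlift_mk {L : Type v} {B : Type w} [LieRing L] [LieAlgebra k L] [LieRing B]
    [LieAlgebra k B] (I : LieIdeal k L) (f : L →ₗ⁅k⁆ B) (h : I ≤ f.ker) (x : L) :
    qlift I f h (mkHom k I x) = f x := rfl

/-- In a metabelian Lie algebra the second derived ideal vanishes. -/
theorem derivedSeries_two_eq_bot_of_isMetabelian {B : Type w} [LieRing B] [LieAlgebra k B]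
    (hB : IsMetabelian B) : derivedSeries k B 2 = ⊥ := by
  have hD1 : ∀ x ∈ derivedSeries k B 1, ∀ m ∈ derivedSeries k B 1, ⁅x, m⁆ = (0 : B) := by
    have hspan : (↑(derivedSeries k B 1) : Submodule k B) =
        Submodule.span k {m | ∃ x ∈ (⊤ : LieIdeal k B), ∃ n ∈ (⊤ : LieIdeal k B), ⁅x, n⁆ = m} := by
      rw [show derivedSeries k B 1 = ⁅(⊤ : LieIdeal k B), (⊤ : LieIdeal k B)⁆ by
        rw [derivedSeries_def, derivedSeriesOfIdeal_succ, derivedSeriesOfIdeal_zero]]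
      exact LieSubmodule.lieIdeal_oper_eq_linear_span' ..
    intro x hx
    have hx' : x ∈ Submodule.span k
        {m | ∃ x ∈ (⊤ : LieIdeal k B), ∃ n ∈ (⊤ : LieIdeal k B), ⁅x, n⁆ = m} := by
      rw [← hspan]; exact hx
    clear hx
    induction hx' using Submodule.span_induction with
    | mem z hz =>
      obtain ⟨a, -, b, -, rfl⟩ := hz
      intro m hm
      have hm' : m ∈ Submodule.span k
          {m | ∃ x ∈ (⊤ : LieIdeal k B), ∃ n ∈ (⊤ : LieIdeal k B), ⁅x, n⁆ = m} := by
        rw [← hspan]; exact hm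
      clear hm
      induction hm' using Submodule.span_induction with
      | mem w hw => obtain ⟨c, -, d, -, rfl⟩ := hw; exact hB a b c d
      | zero => exact lie_zero _
      | add u v _ _ hu hv => rw [lie_add, hu, hv, add_zero]
      | smul t u _ hu => rw [lie_smul, hu, smul_zero]
    | zero => intro m _; exact zero_lie m
    | add u v _ _ hu hv =>
      intro m hm; rw [add_lie, hu m hm, hv m hm, add_zero]
    | smul t u _ hu => intro m hm; rw [smul_lie, hu m hm, smul_zero]
  rw [eq_bot_iff, show derivedSeries k B 2 = ⁅derivedSeries k B 1, derivedSeries k B 1⁆ by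
    rw [derivedSeries_def, derivedSeriesOfIdeal_succ]]
  rw [LieSubmodule.lie_le_iff]
  intro x hx m hm
  rw [LieSubmodule.mem_bot]
  exact hD1 x hx m hm

end LieMeta

/-- The free metabelian Lie algebra over `k` on a set `X` of generators: the quotient of the
free Lie algebra by its second derived ideal. -/
abbrev FreeMetabelian (X : Type v) : Type _ :=
  FreeLieAlgebra k X ⧸ derivedSeries k (FreeLieAlgebra k X) 2

namespace FreeMetabelian

/-- The canonical (free) generators of the free metabelian Lie algebra. -/
noncomputable def of (X : Type v) (x : X) : FreeMetabelian k X :=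
  LieMeta.mkHom k (derivedSeries k (FreeLieAlgebra k X) 2) (FreeLieAlgebra.of k x)

theorem isMetabelian (X : Type v) : IsMetabelian (FreeMetabelian k X) := by
  rintro ⟨a⟩ ⟨b⟩ ⟨c⟩ ⟨d⟩
  show LieMeta.mkHom k (derivedSeries k (FreeLieAlgebra k X) 2) ⁅⁅a, b⁆, ⁅c, d⁆⁆ = 0
  have h1 : ∀ x y : FreeLieAlgebra k X, ⁅x, y⁆ ∈ derivedSeries k (FreeLieAlgebra k X) 1 := by
    intro x y
    rw [show derivedSeries k (FreeLieAlgebra k X) 1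
        = ⁅(⊤ : LieIdeal k (FreeLieAlgebra k X)), (⊤ : LieIdeal k (FreeLieAlgebra k X))⁆ by
      rw [derivedSeries_def, derivedSeriesOfIdeal_succ, derivedSeriesOfIdeal_zero]]
    exact LieSubmodule.lie_mem_lie trivial trivial
  have h2 : ⁅⁅a, b⁆, ⁅c, d⁆⁆ ∈ derivedSeries k (FreeLieAlgebra k X) 2 := by
    rw [show derivedSeries k (FreeLieAlgebra k X) 2
        = ⁅derivedSeries k (FreeLieAlgebra k X) 1, derivedSeries k (FreeLieAlgebra k X) 1⁆ by
      rw [derivedSeries_def, derivedSeriesOfIdeal_succ]]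
    exact LieSubmodule.lie_mem_lie (h1 a b) (h1 c d)
  exact (LieSubmodule.Quotient.mk_eq_zero _).mpr h2

variable {k}

/-- The universal property: a map on generators into a metabelian Lie algebra extends
uniquely to the free metabelian Lie algebra. -/
noncomputable def lift {X : Type v} {B : Type w} [LieRing B] [LieAlgebra k B]
    (f : X → B) (hB : IsMetabelian B) : FreeMetabelian k X →ₗ⁅k⁆ B :=
  LieMeta.qlift _ (FreeLieAlgebra.lift k f) (by
    intro x hx
    rw [LieHom.mem_ker]
    have h1 : FreeLieAlgebra.lift k f x ∈
        LieIdeal.map (FreeLieAlgebra.lift k f) (derivedSeries k (FreeLieAlgebra k X) 2) :=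
      LieIdeal.mem_map hx
    have h2 := LieIdeal.derivedSeries_map_le (f := FreeLieAlgebra.lift k f) 2
    rw [LieMeta.derivedSeries_two_eq_bot_of_isMetabelian hB] at h2
    simpa using h2 h1)

@[simp]
theorem lift_of {X : Type v} {B : Type w} [LieRing B] [LieAlgebra k B]
    (f : X → B) (hB : IsMetabelian B) (x : X) : lift f hB (of k X x) = f x := by
  show FreeLieAlgebra.lift k f (FreeLieAlgebra.of k x) = f x
  simp

end FreeMetabelian

namespace LieAG

variable (r n : ℕ)

/-- The inclusion of `F_r` into `F_{r+n}` sending `aᵢ` to `aᵢ`. -/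
noncomputable def incl : FreeMetabelian k (Fin r) →ₗ⁅k⁆ FreeMetabelian k (Fin r ⊕ Fin n) :=
  FreeMetabelian.lift (fun i => FreeMetabelian.of k _ (Sum.inl i))
    (FreeMetabelian.isMetabelian k _)

/-- Evaluation at the point `p`: the unique Lie algebra morphism `F_{r+n} → F_r` which is the
identity on the generators of `F_r` and sends the unknown `xⱼ` to `p j`. -/
noncomputable def ev (p : Fin n → FreeMetabelian k (Fin r)) :
    FreeMetabelian k (Fin r ⊕ Fin n) →ₗ⁅k⁆ FreeMetabelian k (Fin r) :=
  FreeMetabelian.lift (Sum.elim (FreeMetabelian.of k _) p) (FreeMetabelian.isMetabelian k _)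

/-- The algebraic set defined by the system of equations `S ⊆ F_{r+n}`. -/
def vSet (S : Set (FreeMetabelian k (Fin r ⊕ Fin n))) :
    Set (Fin n → FreeMetabelian k (Fin r)) :=
  {p | ∀ f ∈ S, ev k r n p f = 0}

/-- A subset of affine `n`-space over `F_r` is algebraic if it is the solution set of some
system of equations. -/
def IsAlgSet (Y : Set (Fin n → FreeMetabelian k (Fin r))) : Prop :=
  ∃ S, Y = vSet k r n S

/-- The radical of a subset `Y` of affine `n`-space, as a Lie ideal of `F_{r+n}`:
all equations vanishing on every point of `Y`. -/
noncomputable def radIdeal (Y : Set (Fin n → FreeMetabelian k (Fin r))) :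
    LieIdeal k (FreeMetabelian k (Fin r ⊕ Fin n)) :=
  ⨅ (p : Fin n → FreeMetabelian k (Fin r)) (_ : p ∈ Y), (ev k r n p).ker

/-- The coordinate algebra `Γ(Y) = F_{r+n} / Rad(Y)`. -/
abbrev Coord (Y : Set (Fin n → FreeMetabelian k (Fin r))) : Type _ :=
  FreeMetabelian k (Fin r ⊕ Fin n) ⧸ radIdeal k r n Y

/-- The canonical morphism `κ_Y : F_r → Γ(Y)`. -/
noncomputable def kappa (Y : Set (Fin n → FreeMetabelian k (Fin r))) :
    FreeMetabelian k (Fin r) →ₗ⁅k⁆ Coord k r n Y :=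
  (LieMeta.mkHom k (radIdeal k r n Y)).comp (incl k r n)

theorem radIdeal_le_ker {Y : Set (Fin n → FreeMetabelian k (Fin r))}
    {p : Fin n → FreeMetabelian k (Fin r)} (hp : p ∈ Y) :
    radIdeal k r n Y ≤ (ev k r n p).ker := by
  exact iInf₂_le p hp

/-- The `F_r`-morphism `Γ(Y) → F_r` induced by evaluation at a point of `Y`. -/
noncomputable def pointHom {Y : Set (Fin n → FreeMetabelian k (Fin r))}
    {p : Fin n → FreeMetabelian k (Fin r)} (hp : p ∈ Y) :
    Coord k r n Y →ₗ⁅k⁆ FreeMetabelian k (Fin r) :=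
  LieMeta.qlift _ (ev k r n p) (radIdeal_le_ker k r n hp)

/-- The point of affine space associated with a morphism `Γ(Y) → F_r`: the images of
the unknowns. -/
noncomputable def pointOf {Y : Set (Fin n → FreeMetabelian k (Fin r))}
    (φ : Coord k r n Y →ₗ⁅k⁆ FreeMetabelian k (Fin r)) :
    Fin n → FreeMetabelian k (Fin r) :=
  fun j => φ (LieMeta.mkHom k (radIdeal k r n Y) (FreeMetabelian.of k _ (Sum.inr j)))

/-- The Zariski topology on affine `n`-space over `F_r`: the algebraic sets form a
subbasis of closed sets. -/
def zariski : TopologicalSpace (Fin n → FreeMetabelian k (Fin r)) :=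
  TopologicalSpace.generateFrom {U | ∃ S, U = (vSet k r n S)ᶜ}

/-- A closed subset (in the Zariski topology) is irreducible if it is nonempty and is not the
union of two proper closed subsets. -/
def IsIrredClosed (Y : Set (Fin n → FreeMetabelian k (Fin r))) : Prop :=
  Y.Nonempty ∧ ∀ Y₁ Y₂ : Set (Fin n → FreeMetabelian k (Fin r)),
    @IsClosed _ (zariski k r n) Y₁ → @IsClosed _ (zariski k r n) Y₂ →
      Y₁ ⊂ Y → Y₂ ⊂ Y → Y ≠ Y₁ ∪ Y₂

/-- `Y` and `Z` are isomorphic algebraic sets: there are mutually inverse morphisms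
(given coordinatewise by Lie polynomials) between them. -/
def AlgIso {n m : ℕ} (Y : Set (Fin n → FreeMetabelian k (Fin r)))
    (Z : Set (Fin m → FreeMetabelian k (Fin r))) : Prop :=
  ∃ (fs : Fin m → FreeMetabelian k (Fin r ⊕ Fin n))
    (gs : Fin n → FreeMetabelian k (Fin r ⊕ Fin m)),
    (∀ p ∈ Y, (fun j => ev k r n p (fs j)) ∈ Z) ∧
    (∀ q ∈ Z, (fun i => ev k r m q (gs i)) ∈ Y) ∧
    (∀ p ∈ Y, (fun i => ev k r m (fun j => ev k r n p (fs j)) (gs i)) = p) ∧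
    (∀ q ∈ Z, (fun j => ev k r n (fun i => ev k r m q (gs i)) (fs j)) = q)

end LieAG

/-- The Fitting radical of a Lie algebra: the set of elements whose generated Lie ideal is
nilpotent. -/
def fittingSet (B : Type w) [LieRing B] [LieAlgebra k B] : Set B :=
  {x | LieModule.IsNilpotent (LieSubmodule.lieSpan k B ({x} : Set B))
    (LieSubmodule.lieSpan k B ({x} : Set B))}


/-!
Send `F_r` to the metabelian Lie algebra `A ⋉ Aʳ`, `A = k[X₁, …, X_r]`, by `aᵢ ↦ (Xᵢ, eᵢ)`.
If `c ≡ ∑ λᵢ aᵢ` modulo `F_r²`, the first coordinate of the image of `c` is the linear form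
`ℓ = ∑ λᵢ Xᵢ`, so it vanishes exactly on `F_r²`. The image of `⁅⁅a₁, a₂⁆, c⁆` is
`(0, -ℓ • (X₁ e₂ - X₂ e₁))`, which forces `ℓ = 0` when the bracket vanishes.
If `λⱼ ≠ 0` and `m ≠ j`, the elements `(ad c)ⁿ ⁅a_m, c⁆` of the ideal generated by `c` have images
whose `m`-th coordinate, evaluated at `X = eⱼ`, is `-λⱼⁿ⁺¹ ≠ 0`; so that ideal is not nilpotent.
Conversely `F_r²` is abelian, so the ideal generated by any of its elements is nilpotent.
-/

section Metabelian

variable {k} {L : Type v} [LieRing L] [LieAlgebra k L]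

theorem lie_mem_derivedSeries_one (x y : L) : ⁅x, y⁆ ∈ derivedSeries k L 1 := by
  change ⁅x, y⁆ ∈ (derivedSeries k L 1 : LieSubalgebra k L).toSubmodule
  rw [coe_derivedSeries_one_eq]
  exact Submodule.subset_span ⟨x, y, rfl⟩

theorem IsMetabelian.lie_eq_zero (hL : IsMetabelian L) {x y : L}
    (hx : x ∈ derivedSeries k L 1) (hy : y ∈ derivedSeries k L 1) : ⁅x, y⁆ = 0 := by
  have h : ⁅x, y⁆ ∈ derivedSeries k L 2 := by
    rw [derivedSeries_def, derivedSeriesOfIdeal_succ]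
    exact LieSubmodule.lie_mem_lie hx hy
  rwa [LieMeta.derivedSeries_two_eq_bot_of_isMetabelian hL, LieSubmodule.mem_bot] at h

theorem IsMetabelian.derivedSeries_one_subset_fittingSet (hL : IsMetabelian L) :
    (derivedSeries k L 1 : Set L) ⊆ fittingSet k L := by
  intro x hx
  have hle : LieSubmodule.lieSpan k L {x} ≤ derivedSeries k L 1 :=
    LieSubmodule.lieSpan_le.mpr (Set.singleton_subset_iff.mpr hx)
  have : IsLieAbelian (LieSubmodule.lieSpan k L {x}) :=
    ⟨fun a b => Subtype.ext (hL.lie_eq_zero (hle a.2) (hle b.2))⟩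
  show LieModule.IsNilpotent _ _
  infer_instance

theorem LieIdeal.exists_ad_pow_apply_eq_zero (I : LieIdeal k L) [LieModule.IsNilpotent I I]
    {x z : L} (hx : x ∈ I) (hz : z ∈ I) : ∃ n : ℕ, (LieAlgebra.ad k L x ^ n) z = 0 := by
  obtain ⟨n, hn⟩ := LieModule.isNilpotent_toEnd_of_isNilpotent k I I ⟨x, hx⟩
  refine ⟨n, ?_⟩
  rw [← LieSubalgebra.coe_ad_pow k L (I : LieSubalgebra k L) ⟨x, hx⟩ ⟨z, hz⟩ n]
  exact congrArg Subtype.val (LinearMap.congr_fun hn ⟨z, hz⟩)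

theorem LieHom.map_ad_pow_apply {L' : Type w} [LieRing L'] [LieAlgebra k L'] (f : L →ₗ⁅k⁆ L')
    (x y : L) (n : ℕ) : f ((LieAlgebra.ad k L x ^ n) y) = (LieAlgebra.ad k L' (f x) ^ n) (f y) := by
  induction n with
  | zero => rfl
  | succ n ih => rw [pow_succ', pow_succ', Module.End.mul_apply, Module.End.mul_apply,
      LieAlgebra.ad_apply, LieAlgebra.ad_apply, LieHom.map_lie, ih]

end Metabelian

section AffineLieAlgebra

variable (A M : Type*)

/-- `A ⋉ M`: the Lie algebra of the affine maps `m ↦ a • m + n` of an `A`-module `M`. -/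
def AffineLieAlgebra : Type _ := A × M

namespace AffineLieAlgebra

variable {A M}

def mk (a : A) (m : M) : AffineLieAlgebra A M := (a, m)

@[simp] theorem mk_fst (a : A) (m : M) : (mk a m).1 = a := rfl

@[simp] theorem mk_snd (a : A) (m : M) : (mk a m).2 = m := rfl

variable [CommRing A] [AddCommGroup M]

instance : AddCommGroup (AffineLieAlgebra A M) := inferInstanceAs (AddCommGroup (A × M))

@[simp] theorem snd_zero : (0 : AffineLieAlgebra A M).2 = 0 := rfl

section Module

variable {k} [Algebra k A] [Module k M]

instance : Module k (AffineLieAlgebra A M) := inferInstanceAs (Module k (A × M))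

variable (k) in
def fstₗ : AffineLieAlgebra A M →ₗ[k] A := LinearMap.fst k A M

theorem fstₗ_apply (x : AffineLieAlgebra A M) : fstₗ k x = x.1 := rfl

end Module

variable [Module A M]

instance : LieRing (AffineLieAlgebra A M) where
  bracket x y := ((0 : A), x.1 • y.2 - y.1 • x.2)
  add_lie x y z := Prod.ext (add_zero 0).symm
    (show (x.1 + y.1) • z.2 - z.1 • (x.2 + y.2) =
      (x.1 • z.2 - z.1 • x.2) + (y.1 • z.2 - z.1 • y.2) by module)
  lie_add x y z := Prod.ext (add_zero 0).symm
    (show x.1 • (y.2 + z.2) - (y.1 + z.1) • x.2 =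
      (x.1 • y.2 - y.1 • x.2) + (x.1 • z.2 - z.1 • x.2) by module)
  lie_self x := Prod.ext rfl (sub_self _)
  leibniz_lie x y z := Prod.ext (add_zero 0).symm
    (show x.1 • (y.1 • z.2 - z.1 • y.2) - (0 : A) • x.2 =
      ((0 : A) • z.2 - z.1 • (x.1 • y.2 - y.1 • x.2)) +
        (y.1 • (x.1 • z.2 - z.1 • x.2) - (0 : A) • y.2) by module)

theorem lie_def (x y : AffineLieAlgebra A M) : ⁅x, y⁆ = mk 0 (x.1 • y.2 - y.1 • x.2) := rfl

theorem isMetabelian : IsMetabelian (AffineLieAlgebra A M) := fun _ _ _ _ =>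
  Prod.ext rfl (show (0 : A) • _ - (0 : A) • _ = (0 : M) by simp)

variable {k} [Algebra k A] [Module k M] [IsScalarTower k A M]

instance : LieAlgebra k (AffineLieAlgebra A M) where
  lie_smul t x y := Prod.ext (smul_zero t).symm
    (show x.1 • (t • y.2) - (t • y.1) • x.2 = t • (x.1 • y.2 - y.1 • x.2) by
      rw [smul_comm, smul_assoc, smul_sub])

theorem fst_eq_zero_of_mem_derivedSeries_one {x : AffineLieAlgebra A M}
    (hx : x ∈ derivedSeries k (AffineLieAlgebra A M) 1) : x.1 = 0 := by
  change x ∈ (derivedSeries k (AffineLieAlgebra A M) 1 : LieSubalgebra k _).toSubmodule at hx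
  rw [coe_derivedSeries_one_eq] at hx
  refine (Submodule.span_le (p := LinearMap.ker (fstₗ k)).mpr ?_ hx : _)
  rintro _ ⟨a, b, rfl⟩
  rfl

theorem ad_pow_apply_mk_zero (x : AffineLieAlgebra A M) (u : M) (n : ℕ) :
    (LieAlgebra.ad k (AffineLieAlgebra A M) x ^ n) (mk 0 u) = mk 0 (x.1 ^ n • u) := by
  induction n with
  | zero => simp
  | succ n ih =>
    rw [pow_succ', Module.End.mul_apply, ih, LieAlgebra.ad_apply, lie_def]
    simp [pow_succ', mul_smul]

end AffineLieAlgebra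

end AffineLieAlgebra

open MvPolynomial in
theorem MvPolynomial.eval_single_sum_smul_X {R ι : Type*} [CommSemiring R] [Fintype ι]
    [DecidableEq ι] (l : ι → R) (t : ι) :
    eval (Pi.single t 1) (∑ i, l i • X i : MvPolynomial ι R) = l t := by
  simp [Pi.single_apply]

namespace FreeMetabelian

open MvPolynomial

variable {k} {ι : Type*}

theorem hom_ext {B : Type w} [LieRing B] [LieAlgebra k B] {f g : FreeMetabelian k ι →ₗ⁅k⁆ B}
    (h : ∀ i, f (of k ι i) = g (of k ι i)) : f = g := by
  have key : f.comp (LieMeta.mkHom k (derivedSeries k (FreeLieAlgebra k ι) 2)) =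
      g.comp (LieMeta.mkHom k (derivedSeries k (FreeLieAlgebra k ι) 2)) :=
    FreeLieAlgebra.hom_ext h
  ext ⟨y⟩
  exact LieHom.congr_fun key y

theorem exists_sub_sum_mem_derivedSeries_one [Fintype ι] (c : FreeMetabelian k ι) :
    ∃ l : ι → k, c - ∑ i, l i • of k ι i ∈ derivedSeries k (FreeMetabelian k ι) 1 := by
  let S : LieSubalgebra k (FreeMetabelian k ι) :=
    { toSubmodule := Submodule.span k (Set.range (of k ι)) ⊔
        (derivedSeries k (FreeMetabelian k ι) 1).toSubmodule
      lie_mem' := fun {x y} _ _ => Submodule.mem_sup_right (lie_mem_derivedSeries_one x y) }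
  have hS : IsMetabelian S := fun a b c d => Subtype.ext (isMetabelian k ι a b c d)
  let ψ : FreeMetabelian k ι →ₗ⁅k⁆ S := lift (fun i =>
    ⟨of k ι i, Submodule.mem_sup_left (Submodule.subset_span (Set.mem_range_self i))⟩) hS
  have hψ : S.incl.comp ψ = LieHom.id := hom_ext fun i => by simp [ψ]
  have hc : c ∈ S := by
    rw [← LieHom.id_apply (R := k) c, ← hψ]
    exact (ψ c).2
  obtain ⟨s, hs, d, hd, rfl⟩ := Submodule.mem_sup.mp hc
  obtain ⟨l, rfl⟩ := (Submodule.mem_span_range_iff_exists_fun k).mp hs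
  exact ⟨l, by simpa using hd⟩

variable (k ι) [DecidableEq ι]

noncomputable def toAffine :
    FreeMetabelian k ι →ₗ⁅k⁆ AffineLieAlgebra (MvPolynomial ι k) (ι → MvPolynomial ι k) :=
  lift (fun i => .mk (X i) (Pi.single i 1)) AffineLieAlgebra.isMetabelian

variable {k ι}

@[simp]
theorem toAffine_of (i : ι) : toAffine k ι (of k ι i) = .mk (X i) (Pi.single i 1) :=
  lift_of _ _ i

theorem fst_toAffine_eq_zero_of_mem {d : FreeMetabelian k ι}
    (hd : d ∈ derivedSeries k (FreeMetabelian k ι) 1) : (toAffine k ι d).1 = 0 :=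
  AffineLieAlgebra.fst_eq_zero_of_mem_derivedSeries_one
    (LieIdeal.derivedSeries_map_le 1 (LieIdeal.mem_map hd))

variable [Fintype ι]

theorem fst_toAffine_eq_sum {c : FreeMetabelian k ι} {l : ι → k}
    (h : c - ∑ i, l i • of k ι i ∈ derivedSeries k (FreeMetabelian k ι) 1) :
    (toAffine k ι c).1 = ∑ i, l i • X i := by
  have := fst_toAffine_eq_zero_of_mem h
  rw [← AffineLieAlgebra.fstₗ_apply (k := k), map_sub, map_sum, map_sub, map_sum,
    sub_eq_zero] at this
  simpa [AffineLieAlgebra.fstₗ_apply] using this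

theorem mem_derivedSeries_one_iff {c : FreeMetabelian k ι} :
    c ∈ derivedSeries k (FreeMetabelian k ι) 1 ↔ (toAffine k ι c).1 = 0 := by
  refine ⟨fst_toAffine_eq_zero_of_mem, fun hc => ?_⟩
  obtain ⟨l, hl⟩ := exists_sub_sum_mem_derivedSeries_one c
  have hl0 : l = 0 := funext fun t => by
    rw [← eval_single_sum_smul_X l t, ← fst_toAffine_eq_sum hl, hc, map_zero, Pi.zero_apply]
  simpa [hl0] using hl

theorem lie_lie_of_of_eq_zero_iff {i j : ι} (hij : i ≠ j) (c : FreeMetabelian k ι) :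
    ⁅⁅of k ι i, of k ι j⁆, c⁆ = 0 ↔ c ∈ derivedSeries k (FreeMetabelian k ι) 1 := by
  refine ⟨fun h => ?_, (isMetabelian k ι).lie_eq_zero (lie_mem_derivedSeries_one _ _)⟩
  have hj := congrArg (fun y => (toAffine k ι y).2 j) h
  simp only [LieHom.map_lie, toAffine_of, AffineLieAlgebra.lie_def, AffineLieAlgebra.mk_fst,
    AffineLieAlgebra.mk_snd] at hj
  simp [hij] at hj
  exact mem_derivedSeries_one_iff.mpr hj

theorem not_isNilpotent_lieSpan_singleton [Nontrivial ι] {x : FreeMetabelian k ι}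
    (hx : x ∉ derivedSeries k (FreeMetabelian k ι) 1) :
    ¬ LieModule.IsNilpotent (LieSubmodule.lieSpan k (FreeMetabelian k ι) {x})
      (LieSubmodule.lieSpan k (FreeMetabelian k ι) {x}) := by
  obtain ⟨l, hl⟩ := exists_sub_sum_mem_derivedSeries_one x
  obtain ⟨j, hj⟩ : ∃ j, l j ≠ 0 := by
    by_contra! h
    exact hx (by simpa [h] using hl)
  obtain ⟨m, hmj⟩ := exists_ne j
  intro hnil
  have hxI : x ∈ LieSubmodule.lieSpan k (FreeMetabelian k ι) {x} :=
    LieSubmodule.subset_lieSpan rfl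
  obtain ⟨n, hn⟩ :=
    LieIdeal.exists_ad_pow_apply_eq_zero _ hxI (LieSubmodule.lie_mem _ hxI (x := of k ι m))
  have h := congrArg (fun y => eval (Pi.single j 1) ((toAffine k ι y).2 m)) hn
  simp only [LieHom.map_ad_pow_apply, LieHom.map_lie, toAffine_of, AffineLieAlgebra.lie_def,
    AffineLieAlgebra.ad_pow_apply_mk_zero, AffineLieAlgebra.mk_fst,
    AffineLieAlgebra.mk_snd] at h
  have ha : eval (Pi.single j 1) (toAffine k ι x).1 = l j := by
    rw [fst_toAffine_eq_sum hl, eval_single_sum_smul_X]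
  simp [ha, hmj, hj] at h

theorem fittingSet_eq [Nontrivial ι] :
    fittingSet k (FreeMetabelian k ι) = derivedSeries k (FreeMetabelian k ι) 1 :=
  Set.Subset.antisymm (fun _ hx => by_contra fun h => not_isNilpotent_lieSpan_singleton h hx)
    (isMetabelian k ι).derivedSeries_one_subset_fittingSet

end FreeMetabelian

namespace LieAG

variable {k} {r n : ℕ}

@[simp]
theorem ev_incl (p : Fin n → FreeMetabelian k (Fin r)) (c : FreeMetabelian k (Fin r)) :
    ev k r n p (incl k r n c) = c := by
  have : (ev k r n p).comp (incl k r n) = LieHom.id :=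
    FreeMetabelian.hom_ext fun i => by simp [ev, incl]
  exact LieHom.congr_fun this c

@[simp]
theorem ev_of_inr (p : Fin n → FreeMetabelian k (Fin r)) (j : Fin n) :
    ev k r n p (FreeMetabelian.of k _ (Sum.inr j)) = p j := by
  simp [ev]

end LieAG

/-- In the free metabelian Lie algebra `F_r` (`r ≥ 2`, generators `a i`),
an element `c` satisfies `⁅⁅a₁,a₂⁆,c⁆ = 0` iff `c` lies in the derived ideal `F_r²`;
consequently the Fitting radical `Fit(F_r) = F_r²` is the algebraic set in affine `1`-space
defined by the single equation `⁅⁅a₁,a₂⁆,x₁⁆ = 0`. -/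
theorem fitting_is_algebraic
    (k : Type u) [Field k] (r : ℕ) (hr : 2 ≤ r) :
    (∀ c : FreeMetabelian k (Fin r),
      ⁅⁅FreeMetabelian.of k (Fin r) ⟨0, by omega⟩, FreeMetabelian.of k (Fin r) ⟨1, by omega⟩⁆,
        c⁆ = 0 ↔ c ∈ LieAlgebra.derivedSeries k (FreeMetabelian k (Fin r)) 1) ∧
    fittingSet k (FreeMetabelian k (Fin r)) =
      ↑(LieAlgebra.derivedSeries k (FreeMetabelian k (Fin r)) 1) ∧
    {p : Fin 1 → FreeMetabelian k (Fin r) | p 0 ∈ fittingSet k (FreeMetabelian k (Fin r))} =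
      LieAG.vSet k r 1
        {⁅⁅LieAG.incl k r 1 (FreeMetabelian.of k (Fin r) ⟨0, by omega⟩),
            LieAG.incl k r 1 (FreeMetabelian.of k (Fin r) ⟨1, by omega⟩)⁆,
          FreeMetabelian.of k (Fin r ⊕ Fin 1) (Sum.inr 0)⁆} := by
  have h01 : (⟨0, by omega⟩ : Fin r) ≠ ⟨1, by omega⟩ := by simp
  have : Nontrivial (Fin r) := Fin.nontrivial_iff_two_le.mpr hr
  refine ⟨FreeMetabelian.lie_lie_of_of_eq_zero_iff h01, FreeMetabelian.fittingSet_eq, ?_⟩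
  ext p
  simp only [LieAG.vSet, Set.mem_ofPred_eq, Set.mem_singleton_iff, forall_eq, LieHom.map_lie,
    LieAG.ev_incl, LieAG.ev_of_inr, FreeMetabelian.fittingSet_eq, SetLike.mem_coe]
  exact (FreeMetabelian.lie_lie_of_of_eq_zero_iff h01 (p 0)).symm
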